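/- If for some (λ, μ, ν, σ) ∈ ℂ⁴ the polynomial F_{λ,μ,ν,σ} admits three pairwise distinct singular points in ℂ⁴, then σ ≠ 0. -/
import Mathlib


open MvPolynomial

/-- The miniversal deformation `F_{λ,μ,ν,σ} = x² − y³ − z² + w³ + λ + μy − νw + σyw` of the
threefold cusp, with variables `x = X 0`, `y = X 1`, `z = X 2`, `w = X 3`. -/
noncomputable def Fdef (l m n s : ℂ) : MvPolynomial (Fin 4) ℂ :=
  X 0 ^ 2 - X 1 ^ 3 - X 2 ^ 2 + X 3 ^ 3 + C l + C m * X 1 - C n * X 3 + C s * (X 1 * X 3)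

/-- A singular point of `F_{λ,μ,ν,σ}`: a point of `ℂ⁴` at which `F_{λ,μ,ν,σ}` and all four
of its partial derivatives vanish. -/
def IsSingPt (l m n s : ℂ) (p : Fin 4 → ℂ) : Prop :=
  eval p (Fdef l m n s) = 0 ∧ ∀ i : Fin 4, eval p (pderiv i (Fdef l m n s)) = 0

lemma sing_eqs (l m n : ℂ) (p : Fin 4 → ℂ) (h : IsSingPt l m n 0 p) :
    p 0 = 0 ∧ p 2 = 0 ∧ 3*(p 1)^2 = m ∧ 3*(p 3)^2 = n ∧
      (p 3)^3 - (p 1)^3 + l + m*p 1 - n*p 3 = 0 := by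
  obtain ⟨h0, hd⟩ := h
  have e0 := hd 0
  have e1 := hd 1
  have e2 := hd 2
  have e3 := hd 3
  simp [Fdef, eval_X, pderiv_X] at h0 e0 e1 e2 e3
  refine ⟨e0, e2, by linear_combination -e1, by linear_combination e3, ?_⟩
  linear_combination h0 - p 0 * e0 + p 2 * e2

/-- If two singular points (with s = 0) share their `y`-coordinate, they are equal. -/
lemma same_y (l m n : ℂ) (p q : Fin 4 → ℂ) (hp : IsSingPt l m n 0 p)
    (hq : IsSingPt l m n 0 q) (hy : p 1 = q 1) : p = q := by
  obtain ⟨hx, hz, hm, hn, hF⟩ := sing_eqs l m n p hp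
  obtain ⟨hx', hz', hm', hn', hF'⟩ := sing_eqs l m n q hq
  set a := p 3
  set b := q 3
  -- (a-b)(a+b) = 0 and (a-b)²(2a+b) = 0
  have h1 : (a - b) * (a + b) = 0 := by linear_combination (hn - hn') / 3
  rw [hy] at hF
  have h2 : (a - b)^2 * (2*a + b) = 0 := by
    linear_combination hF' - hF + (a - b) * hn
  have hab : a = b := by
    rcases mul_eq_zero.mp h1 with h | h
    · linear_combination h
    · -- a = -b
      have ha : a = -b := by linear_combination h
      have : (a - b)^2 * a = 0 := by rw [ha] at h2 ⊢; linear_combination h2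
      rcases mul_eq_zero.mp this with h' | h'
      · have : a - b = 0 := pow_eq_zero_iff (by norm_num) |>.mp h'
        linear_combination this
      · rw [ha] at h' ⊢
        have hb : b = 0 := by
          have hn0 : n = 0 := by rw [← hn, ha]; ring_nf; linear_combination 3 * h' * (-b) / 1
          have := hn'
          rw [hn0] at this
          have : b ^ 2 = 0 := by linear_combination this / 3
          exact pow_eq_zero_iff (by norm_num) |>.mp this
        rw [hb]; ring
  funext i
  fin_cases i
  · simp [hx, hx']
  · simpa using hy
  · simp [hz, hz']
  · simpa using hab

/-- Symmetric: if two singular points share their `w`-coordinate, they are equal. -/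
lemma same_w (l m n : ℂ) (p q : Fin 4 → ℂ) (hp : IsSingPt l m n 0 p)
    (hq : IsSingPt l m n 0 q) (hw : p 3 = q 3) : p = q := by
  obtain ⟨hx, hz, hm, hn, hF⟩ := sing_eqs l m n p hp
  obtain ⟨hx', hz', hm', hn', hF'⟩ := sing_eqs l m n q hq
  set a := p 1
  set b := q 1
  have h1 : (a - b) * (a + b) = 0 := by linear_combination (hm - hm') / 3
  rw [hw] at hF
  have h2 : (a - b)^2 * (2*a + b) = 0 := by
    linear_combination hF - hF' + (a - b) * hm
  have hab : a = b := by
    rcases mul_eq_zero.mp h1 with h | h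
    · linear_combination h
    · have ha : a = -b := by linear_combination h
      have : (a - b)^2 * a = 0 := by rw [ha] at h2 ⊢; linear_combination h2
      rcases mul_eq_zero.mp this with h' | h'
      · have : a - b = 0 := pow_eq_zero_iff (by norm_num) |>.mp h'
        linear_combination this
      · rw [ha] at h' ⊢
        have hb : b = 0 := by
          have : b ^ 2 = 0 := by linear_combination -h' * b
          exact pow_eq_zero_iff (by norm_num) |>.mp this
        rw [hb]; ring
  funext i
  fin_cases i
  · simp [hx, hx']
  · simpa using hab
  · simp [hz, hz']
  · simpa using hw

/-- If `F_{λ,μ,ν,σ}` admits three pairwise distinct singular points, then `σ ≠ 0`. -/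
theorem stmt_8 (l m n s : ℂ) (p₁ p₂ p₃ : Fin 4 → ℂ)
    (h₁ : IsSingPt l m n s p₁) (h₂ : IsSingPt l m n s p₂) (h₃ : IsSingPt l m n s p₃)
    (h₁₂ : p₁ ≠ p₂) (h₁₃ : p₁ ≠ p₃) (h₂₃ : p₂ ≠ p₃) :
    s ≠ 0 := by
  rintro rfl
  obtain ⟨_, _, hm₁, _, _⟩ := sing_eqs l m n p₁ h₁
  obtain ⟨_, _, hm₂, _, _⟩ := sing_eqs l m n p₂ h₂
  obtain ⟨_, _, hm₃, _, _⟩ := sing_eqs l m n p₃ h₃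
  -- y-coordinates satisfy y² = m/3, so each yᵢ = ±y₁
  have k12 : (p₁ 1 - p₂ 1) * (p₁ 1 + p₂ 1) = 0 := by linear_combination (hm₁ - hm₂) / 3
  have k13 : (p₁ 1 - p₃ 1) * (p₁ 1 + p₃ 1) = 0 := by linear_combination (hm₁ - hm₃) / 3
  rcases mul_eq_zero.mp k12 with h | h
  · exact h₁₂ (same_y l m n p₁ p₂ h₁ h₂ (by linear_combination h))
  · rcases mul_eq_zero.mp k13 with h' | h'
    · exact h₁₃ (same_y l m n p₁ p₃ h₁ h₃ (by linear_combination h'))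
    · -- p₂ 1 = -p₁ 1 = p₃ 1
      exact h₂₃ (same_y l m n p₂ p₃ h₂ h₃ (by linear_combination h - h'))
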